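/- arXiv:2108.06548 — 5 statements merged into one kernel-verified Lean document; each statement's English description precedes it below -/
import Mathlib

section
/- For the reduced-degree midpoint method applied to the quartic oscillator, given by (x₁' − x₁)/h = −((x₂'+x₂)/2)·((x₂'²+x₂²)/2) and (x₂' − x₂)/h = (x₁'+x₁)/2, the Hamiltonian H(x₁,x₂) = x₁²/2 + x₂⁴/4 is exactly preserved: H(x₁',x₂') = H(x₁,x₂). -/
/-- The reduced-degree midpoint method for the quartic oscillator exactly preserves
the Hamiltonian H(x₁,x₂) = x₁²/2 + x₂⁴/4. -/
theorem rdmp_quartic_oscillator_energy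
    (h x₁ x₂ x₁' x₂' : ℝ) (hh : h ≠ 0)
    (h1 : (x₁' - x₁) / h = -((x₂' + x₂) / 2) * ((x₂' ^ 2 + x₂ ^ 2) / 2))
    (h2 : (x₂' - x₂) / h = (x₁' + x₁) / 2) :
    (1 / 2) * x₁' ^ 2 + (1 / 4) * x₂' ^ 4 = (1 / 2) * x₁ ^ 2 + (1 / 4) * x₂ ^ 4 := by
  field_simp at h1 h2
  linear_combination ((x₁' + x₁)/8) * h1 + ((x₂ + x₂') * (x₂' ^ 2 + x₂ ^ 2)/8) * h2
end

section
/- For the reduced-degree midpoint method applied to the octic oscillator, given by (x₁' − x₁)/h = −((x₂'+x₂)/2)·((x₂'²+x₂²)/2)·((x₂'⁴+x₂⁴)/2) and (x₂' − x₂)/h = (x₁'+x₁)/2, the Hamiltonian H(x₁,x₂) = x₁²/2 + x₂⁸/8 is exactly preserved: H(x₁',x₂') = H(x₁,x₂). -/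
/-- The reduced-degree midpoint method for the octic oscillator exactly preserves
the Hamiltonian H(x₁,x₂) = x₁²/2 + x₂⁸/8. -/
theorem rdmp_octic_oscillator_energy
    (h x₁ x₂ x₁' x₂' : ℝ) (hh : h ≠ 0)
    (h1 : (x₁' - x₁) / h =
      -((x₂' + x₂) / 2) * ((x₂' ^ 2 + x₂ ^ 2) / 2) * ((x₂' ^ 4 + x₂ ^ 4) / 2))
    (h2 : (x₂' - x₂) / h = (x₁' + x₁) / 2) :
    (1 / 2) * x₁' ^ 2 + (1 / 8) * x₂' ^ 8 = (1 / 2) * x₁ ^ 2 + (1 / 8) * x₂ ^ 8 := by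
  rw [div_eq_iff hh] at h1 h2
  linear_combination ((x₁' + x₁) / 2) * h1 + ((x₂' + x₂) * (x₂' ^ 2 + x₂ ^ 2) * (x₂' ^ 4 + x₂ ^ 4) / 8) * h2
end

section
/- For all real x, x': ∫₀¹ ((1−ξ)x + ξx')⁷ dξ = ((x'+x)/2)·((x'²+x²)/2)·((x'⁴+x⁴)/2). Hence the reduced-degree midpoint method for the octic oscillator coincides with the averaged vector field method. -/
/-! The integrand is a power of the affine map `ξ ↦ (1 - ξ) x + ξ x'`, so the integral of its
`n`-th power is the divided difference `(x'^(n+1) - x^(n+1)) / ((n+1)(x' - x))`, i.e. the mean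
`(∑ x'^i x^(n-i)) / (n+1)` of the monomials of degree `n`. For `n = 7` that sum factors as
`(x' + x)(x'^2 + x^2)(x'^4 + x^4)`. -/

open Finset

theorem sub_mul_integral_lineMap_pow (a b : ℝ) (n : ℕ) :
    (b - a) * ∫ ξ in (0:ℝ)..1, ((1 - ξ) * a + ξ * b) ^ n
      = (b ^ (n + 1) - a ^ (n + 1)) / (n + 1) := by
  have hderiv : ∀ ξ ∈ Set.uIcc (0:ℝ) 1,
      HasDerivAt (fun t : ℝ => ((1 - t) * a + t * b) ^ (n + 1) / (n + 1))
        ((b - a) * ((1 - ξ) * a + ξ * b) ^ n) ξ := by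
    intro ξ _
    have hline : HasDerivAt (fun t : ℝ => (1 - t) * a + t * b) (b - a) ξ := by
      refine ((((hasDerivAt_id ξ).const_sub 1).mul_const a).add
        ((hasDerivAt_id ξ).mul_const b)).congr_deriv ?_
      ring
    refine ((hline.pow (n + 1)).div_const ((n : ℝ) + 1)).congr_deriv ?_
    push_cast
    field_simp
  rw [← intervalIntegral.integral_const_mul,
    intervalIntegral.integral_eq_sub_of_hasDerivAt hderiv
    ((by fun_prop : Continuous _).intervalIntegrable _ _)]
  norm_num [sub_div]

theorem integral_lineMap_pow (a b : ℝ) (n : ℕ) :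
    ∫ ξ in (0:ℝ)..1, ((1 - ξ) * a + ξ * b) ^ n
      = (∑ i ∈ range (n + 1), b ^ i * a ^ (n - i)) / (n + 1) := by
  rcases eq_or_ne a b with rfl | hab
  · have hsum : ∑ i ∈ range (n + 1), a ^ i * a ^ (n - i) = (n + 1) * a ^ n := by
      rw [sum_congr rfl fun i hi => by
        rw [← pow_add, Nat.add_sub_cancel' (mem_range_succ_iff.mp hi)]]
      simp
    simp only [show ∀ ξ : ℝ, (1 - ξ) * a + ξ * a = a from fun ξ => by ring, hsum]
    field_simp
    simp
  · refine mul_left_cancel₀ (sub_ne_zero.mpr hab.symm) ?_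
    rw [sub_mul_integral_lineMap_pow, ← geom_sum₂_mul, Nat.add_sub_cancel]
    ring

/-- For all real x, x': ∫₀¹ ((1−ξ)x + ξx')⁷ dξ = ((x'+x)/2)((x'²+x²)/2)((x'⁴+x⁴)/2). -/
theorem avf_septic_integral (x x' : ℝ) :
    (∫ ξ in (0:ℝ)..1, ((1 - ξ) * x + ξ * x') ^ 7)
      = ((x' + x) / 2) * ((x' ^ 2 + x ^ 2) / 2) * ((x' ^ 4 + x ^ 4) / 2) := by
  rw [integral_lineMap_pow]
  simp only [sum_range_succ, sum_range_zero]
  ring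
end

section
/- The reduced-degree midpoint scheme (x₁'−x₁)/h = −2·((x₁'+x₁)/2)·((x₁'x₂'+x₁x₂)/2) − 4·((x₂'+x₂)/2)·((x₂'²+x₂²)/2), (x₂'−x₂)/h = 2·((x₂'+x₂)/2)·((x₁'x₂'+x₁x₂)/2) + (x₁'+x₁)/2 exactly preserves H(x₁,x₂) = x₁²/2 + x₂⁴ + x₁²x₂²: H(x₁',x₂') = H(x₁,x₂). -/
/-- The reduced-degree midpoint scheme for the planar quartic-Hamiltonian ODE
exactly preserves H(x₁,x₂) = x₁²/2 + x₂⁴ + x₁²x₂². -/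
theorem rdmp_planar_quartic_energy
    (h x₁ x₂ x₁' x₂' : ℝ) (hh : h ≠ 0)
    (h1 : (x₁' - x₁) / h =
      -2 * ((x₁' + x₁) / 2) * ((x₁' * x₂' + x₁ * x₂) / 2)
        - 4 * ((x₂' + x₂) / 2) * ((x₂' ^ 2 + x₂ ^ 2) / 2))
    (h2 : (x₂' - x₂) / h =
      2 * ((x₂' + x₂) / 2) * ((x₁' * x₂' + x₁ * x₂) / 2) + (x₁' + x₁) / 2) :
    (1 / 2) * x₁' ^ 2 + x₂' ^ 4 + x₁' ^ 2 * x₂' ^ 2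
      = (1 / 2) * x₁ ^ 2 + x₂ ^ 4 + x₁ ^ 2 * x₂ ^ 2 := by
  rw [div_eq_iff hh] at h1 h2
  linear_combination ((x₁' + x₁) / 2 + (x₂' + x₂) / 2 * (x₁' * x₂' + x₁ * x₂)) * h1
    + ((x₂' ^ 2 + x₂ ^ 2) * (x₂' + x₂) + (x₁' + x₁) / 2 * (x₁' * x₂' + x₁ * x₂)) * h2
end

section
/- For all real x, x': ∫₀¹ ((1−ξ)x + ξx')^{2^{k+1}−1} dξ = ∏_{j=0}^{k} (x'^{2^j} + x^{2^j})/2. In particular the averaged vector field applied to the power nonlinearity x^{2^{k+1}−1} equals the product of midpoint averages of iterated squares. -/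
lemma two_pow_sum_range (n : ℕ) : ∑ i ∈ Finset.range n, 2 ^ i = 2 ^ n - 1 := by
  induction n with
  | zero => simp
  | succ n ih =>
    rw [Finset.sum_range_succ, ih, pow_succ]
    have : 1 ≤ 2 ^ n := Nat.one_le_two_pow
    omega

lemma factor_prod (x x' : ℝ) (m : ℕ) :
    (x' - x) * ∏ j ∈ Finset.range m, (x' ^ (2 ^ j) + x ^ (2 ^ j))
      = x' ^ (2 ^ m) - x ^ (2 ^ m) := by
  induction m with
  | zero => simp
  | succ m ih =>
    rw [Finset.prod_range_succ, ← mul_assoc, ih, pow_succ, pow_mul, pow_mul]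
    ring

/-- For all k and real x, x':
∫₀¹ ((1−ξ)x + ξx')^(2^(k+1)−1) dξ = ∏_{j=0}^{k} (x'^(2^j) + x^(2^j))/2. -/
theorem avf_power_integral (k : ℕ) (x x' : ℝ) :
    (∫ ξ in (0:ℝ)..1, ((1 - ξ) * x + ξ * x') ^ (2 ^ (k + 1) - 1))
      = ∏ j ∈ Finset.range (k + 1), (x' ^ (2 ^ j) + x ^ (2 ^ j)) / 2 := by
  set n : ℕ := 2 ^ (k + 1) - 1 with hn
  have hn1 : n + 1 = 2 ^ (k + 1) := by
    have : 1 ≤ 2 ^ (k + 1) := Nat.one_le_two_pow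
    omega
  by_cases h : x' = x
  · subst h
    have h1 : ∀ ξ : ℝ, (1 - ξ) * x' + ξ * x' = x' := fun ξ => by ring
    simp only [h1, intervalIntegral.integral_const, smul_eq_mul, sub_zero, one_mul]
    have h2 : ∀ j ∈ Finset.range (k + 1),
        (x' ^ (2 ^ j) + x' ^ (2 ^ j)) / 2 = x' ^ (2 ^ j) := fun j _ => by ring
    rw [Finset.prod_congr rfl h2, Finset.prod_pow_eq_pow_sum, two_pow_sum_range]
  · have hc : x' - x ≠ 0 := sub_ne_zero.mpr h
    have key : (fun ξ : ℝ => ((1 - ξ) * x + ξ * x') ^ n)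
        = fun ξ : ℝ => ((x' - x) * ξ + x) ^ n := by
      funext ξ; ring_nf
    rw [intervalIntegral.integral_congr (g := fun ξ : ℝ => ((x' - x) * ξ + x) ^ n)
        (fun ξ _ => by ring_nf),
      intervalIntegral.integral_comp_mul_add (fun t => t ^ n) hc x]
    simp only [mul_zero, zero_add, mul_one, sub_add_cancel, integral_pow, smul_eq_mul]
    have hfac := factor_prod x x' (k + 1)
    have hcast : ((n : ℝ) + 1) = 2 ^ (k + 1) := by exact_mod_cast congrArg Nat.cast hn1
    rw [hcast, hn1, ← hfac, Finset.prod_div_distrib, Finset.prod_const, Finset.card_range]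
    field_simp
end
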